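/- For every δ ∈ [0.48, 0.5) and every integer m ≥ 3, S(δ,m) ≤ S(δ,4) = (1/4)·√(1 + (4δ-1)²), where S(δ,m) := |sin(π⌊δm⌋/m)/(m sin(π/m)) + (δ - ⌊δm⌋/m)·e((⌊δm⌋+1)/(2m))| and e(x) = exp(2πix). -/

import Mathlib

open Complex Real

/-- `e(x) = exp(2πix)`. -/
noncomputable def e (x : ℝ) : ℂ := Complex.exp (2 * Real.pi * Complex.I * x)

/-- The extremal bound `S(δ, m)` for linear combinations of `m`-th roots of unity. -/
noncomputable def S (δ : ℝ) (m : ℕ) : ℝ :=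
  Norm.norm
    ((Real.sin (Real.pi * (⌊δ * m⌋ : ℝ) / m) / (m * Real.sin (Real.pi / m)) : ℝ)
      + ((δ - (⌊δ * m⌋ : ℝ) / m : ℝ) : ℂ) * e (((⌊δ * m⌋ : ℝ) + 1) / (2 * m)))

private lemma abs_aux (a b t : ℝ) :
    Norm.norm ((a : ℂ) + (b : ℂ) * e t)
      = Real.sqrt (a ^ 2 + b ^ 2 + 2 * a * b * Real.cos (2 * Real.pi * t)) := by
  have he : e t = ((Real.cos (2 * Real.pi * t) : ℝ) : ℂ)
      + ((Real.sin (2 * Real.pi * t) : ℝ) : ℂ) * Complex.I := by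
    rw [e, show (2 * Real.pi * Complex.I * t : ℂ) = ((2 * Real.pi * t : ℝ) : ℂ) * Complex.I by
      push_cast; ring, Complex.exp_mul_I, Complex.ofReal_cos, Complex.ofReal_sin]
  rw [he, Complex.norm_def, Complex.normSq_apply]
  have h1 : ((a : ℂ) + (b : ℂ) * (((Real.cos (2 * Real.pi * t) : ℝ) : ℂ)
      + ((Real.sin (2 * Real.pi * t) : ℝ) : ℂ) * Complex.I)).re
      = a + b * Real.cos (2 * Real.pi * t) := by
    simp only [Complex.add_re, Complex.mul_re, Complex.ofReal_re, Complex.ofReal_im,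
      Complex.add_im, Complex.mul_im, Complex.I_re, Complex.I_im]
    ring
  have h2 : ((a : ℂ) + (b : ℂ) * (((Real.cos (2 * Real.pi * t) : ℝ) : ℂ)
      + ((Real.sin (2 * Real.pi * t) : ℝ) : ℂ) * Complex.I)).im
      = b * Real.sin (2 * Real.pi * t) := by
    simp only [Complex.add_re, Complex.mul_re, Complex.ofReal_re, Complex.ofReal_im,
      Complex.add_im, Complex.mul_im, Complex.I_re, Complex.I_im]
    ring
  rw [h1, h2]
  congr 1
  linear_combination (b ^ 2) * (Real.sin_sq_add_cos_sq (2 * Real.pi * t))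

private lemma S_eq (δ : ℝ) (m : ℕ) (hm : 0 < (m : ℝ)) :
    S δ m = Real.sqrt
      ((Real.sin (Real.pi * (⌊δ * m⌋ : ℝ) / m) / (m * Real.sin (Real.pi / m))) ^ 2
        + (δ - (⌊δ * m⌋ : ℝ) / m) ^ 2
        + 2 * (Real.sin (Real.pi * (⌊δ * m⌋ : ℝ) / m) / (m * Real.sin (Real.pi / m)))
            * (δ - (⌊δ * m⌋ : ℝ) / m)
            * Real.cos (Real.pi * ((⌊δ * m⌋ : ℝ) + 1) / m)) := by
  have harg : 2 * Real.pi * (((⌊δ * m⌋ : ℝ) + 1) / (2 * m))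
      = Real.pi * ((⌊δ * m⌋ : ℝ) + 1) / m := by
    field_simp
  rw [S, abs_aux, harg]

private lemma S4_eq (δ : ℝ) (hδ1 : (0.48 : ℝ) ≤ δ) (hδ2 : δ < (0.5 : ℝ)) :
    S δ 4 = Real.sqrt (1 / 16 + (δ - 1 / 4) ^ 2) := by
  have hfl : ⌊δ * ((4 : ℕ) : ℝ)⌋ = 1 := by
    rw [Int.floor_eq_iff]
    push_cast
    constructor <;> nlinarith
  rw [S_eq δ 4 (by norm_num), hfl]
  have hsin : Real.sin (Real.pi / (4 : ℕ)) ≠ 0 := by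
    push_cast
    refine ne_of_gt (Real.sin_pos_of_pos_of_lt_pi (by positivity) ?_)
    nlinarith [Real.pi_pos]
  have h2 : Real.cos (Real.pi * (((1 : ℤ) : ℝ) + 1) / ((4 : ℕ) : ℝ)) = 0 := by
    rw [show Real.pi * (((1 : ℤ) : ℝ) + 1) / ((4 : ℕ) : ℝ) = Real.pi / 2 by push_cast; ring]
    exact Real.cos_pi_div_two
  have h1 : Real.pi * ((1 : ℤ) : ℝ) / ((4 : ℕ) : ℝ) = Real.pi / (4 : ℕ) := by
    push_cast; ring
  rw [h2, h1]
  have h3 : Real.sin (Real.pi / (4 : ℕ)) / ((4 : ℕ) * Real.sin (Real.pi / (4 : ℕ)))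
      = 1 / 4 := by
    rw [div_eq_iff (by positivity : ((4 : ℕ) : ℝ) * Real.sin (Real.pi / (4 : ℕ)) ≠ 0)]
    push_cast
    ring
  rw [h3]
  congr 1
  push_cast
  ring


private lemma num1 (A B Y δ : ℝ) (hA13 : A ≤ 1 / 3) (hA0 : 0 ≤ A)
    (hBm2 : B ^ 2 - Y ≤ 0) (hδ1 : (0.48 : ℝ) ≤ δ) :
    A ^ 2 + B ^ 2 - Y ≤ 1 / 16 + (δ - 1 / 4) ^ 2 := by
  nlinarith [sq_nonneg (δ - 0.48)]

private lemma num6 (s δ : ℝ) (hs : s ^ 2 = 3) (hδ1 : (0.48 : ℝ) ≤ δ) :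
    (s / 6) ^ 2 + (δ - 1 / 3) ^ 2 + 2 * (s / 6) * (δ - 1 / 3) * 0
      ≤ 1 / 16 + (δ - 1 / 4) ^ 2 := by
  nlinarith [hs]

private lemma num8 (A δ : ℝ) (hA' : A ≤ 0.3184) (hA0 : 0 ≤ A) (hδ1 : (0.48 : ℝ) ≤ δ) :
    A ^ 2 + (δ - 3 / 8) ^ 2 + 2 * A * (δ - 3 / 8) * 0 ≤ 1 / 16 + (δ - 1 / 4) ^ 2 := by
  nlinarith [sq_nonneg (δ - 0.48)]

private lemma num10 (A B δ : ℝ) (hA' : A ≤ 0.3184) (hA0 : 0 ≤ A) (hB0 : 0 ≤ B)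
    (hB10 : B ≤ 1 / 10) (hδ1 : (0.48 : ℝ) ≤ δ) :
    A ^ 2 + B ^ 2 + 2 * A * B * 0 ≤ 1 / 16 + (δ - 1 / 4) ^ 2 := by
  nlinarith [sq_nonneg (δ - 0.48)]

private lemma num26 (A B c δ : ℝ) (hA' : A ≤ 0.3184) (hA0 : 0 ≤ A) (hB0 : 0 ≤ B)
    (hB26 : B ≤ 1 / 26) (hcle : c ≤ 0.0629) (hAB : 0 ≤ A * B) (hδ1 : (0.48 : ℝ) ≤ δ) :
    A ^ 2 + B ^ 2 + 2 * A * B * c ≤ 1 / 16 + (δ - 1 / 4) ^ 2 := by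
  nlinarith [sq_nonneg (δ - 0.48), mul_le_mul_of_nonneg_right hA' hB0]

private lemma numsin (p q s t : ℝ) (hp6 : 3.141592 < p) (hp7 : p < 3.141593)
    (hlt : q < s) (heq : q = p - p * t ^ 2 / 4) (htub : t ≤ 0.3927) (ht0 : 0 < t) :
    3 ≤ s := by
  nlinarith [sq_nonneg t, mul_pos ht0 ht0]

set_option maxHeartbeats 2000000 in
private lemma key (δ : ℝ) (hδ1 : (0.48 : ℝ) ≤ δ) (hδ2 : δ < (0.5 : ℝ)) (m : ℕ)
    (hm : 3 ≤ m) (hm4 : m ≠ 4) :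
    S δ m ≤ Real.sqrt (1 / 16 + (δ - 1 / 4) ^ 2) := by
  have hmR : (3 : ℝ) ≤ (m : ℝ) := by exact_mod_cast hm
  have hm0 : (0 : ℝ) < (m : ℝ) := by linarith
  have hπ := Real.pi_pos
  have hπ6 : 3.141592 < Real.pi := Real.pi_gt_d6
  have hπ7 : Real.pi < 3.141593 := Real.pi_lt_d6
  rw [S_eq δ m hm0]
  apply Real.sqrt_le_sqrt
  set k : ℤ := ⌊δ * (m : ℝ)⌋ with hkdef
  set A : ℝ := Real.sin (Real.pi * (k : ℝ) / m) / (m * Real.sin (Real.pi / m)) with hAdef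
  set B : ℝ := δ - (k : ℝ) / m with hBdef
  set c : ℝ := Real.cos (Real.pi * ((k : ℝ) + 1) / m) with hcdef
  have hk1 : (k : ℝ) ≤ δ * m := Int.floor_le _
  have hk2 : δ * m < (k : ℝ) + 1 := Int.lt_floor_add_one _
  have hkge1 : (1 : ℝ) ≤ (k : ℝ) := by
    have : (1 : ℤ) ≤ k := Int.le_floor.mpr (by push_cast; nlinarith)
    exact_mod_cast this
  have h2kR : 2 * (k : ℝ) < (m : ℝ) := by nlinarith
  have h2kZ : 2 * k ≤ (m : ℤ) - 1 := by
    have : 2 * k < (m : ℤ) := by exact_mod_cast h2kR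
    omega
  -- positivity facts
  have hsinm_pos : 0 < Real.sin (Real.pi / m) :=
    Real.sin_pos_of_pos_of_lt_pi (by positivity)
      (div_lt_self hπ (by linarith))
  have hms_pos : 0 < (m : ℝ) * Real.sin (Real.pi / m) := by positivity
  have hA0 : 0 ≤ A := by
    rw [hAdef]
    apply div_nonneg _ hms_pos.le
    apply Real.sin_nonneg_of_nonneg_of_le_pi
    · positivity
    · rw [div_le_iff₀ hm0]
      nlinarith
  have hB0 : 0 ≤ B := by
    rw [hBdef, sub_nonneg, div_le_iff₀ hm0]
    exact hk1
  have hB1 : B < 1 / m := by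
    have hd : δ < ((k : ℝ) + 1) / m := by
      rw [lt_div_iff₀ hm0]; linarith
    have : ((k : ℝ) + 1) / m - (k : ℝ) / m = 1 / m := by ring
    rw [hBdef]
    linarith
  -- common bound A ≤ 0.3184 whenever sin(πk/m) ≤ cos(π/m)
  have hcosm_pos : 0 < Real.cos (Real.pi / m) := by
    apply Real.cos_pos_of_mem_Ioo
    constructor
    · have : (0 : ℝ) < Real.pi / m := by positivity
      linarith
    · rw [div_lt_iff₀ hm0]
      nlinarith
  have htanlt : Real.pi * Real.cos (Real.pi / m) < (m : ℝ) * Real.sin (Real.pi / m) := by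
    have h1 : Real.pi / m < Real.tan (Real.pi / m) := by
      apply Real.lt_tan (by positivity)
      rw [div_lt_iff₀ hm0]
      nlinarith
    rw [Real.tan_eq_sin_div_cos, lt_div_iff₀ hcosm_pos] at h1
    have h2 := mul_lt_mul_of_pos_left h1 hm0
    have h3 : (m : ℝ) * (Real.pi / m * Real.cos (Real.pi / m))
        = Real.pi * Real.cos (Real.pi / m) := by
      field_simp
    rw [h3] at h2
    linarith
  have hAb : Real.sin (Real.pi * (k : ℝ) / m) ≤ Real.cos (Real.pi / m) → A ≤ 0.3184 := by
    intro hs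
    have hA_le : A ≤ Real.cos (Real.pi / m) / ((m : ℝ) * Real.sin (Real.pi / m)) := by
      rw [hAdef]
      gcongr
    have hstep : Real.cos (Real.pi / m) / ((m : ℝ) * Real.sin (Real.pi / m)) ≤ 1 / Real.pi := by
      rw [div_le_div_iff₀ hms_pos hπ]
      nlinarith [htanlt]
    have h1π : 1 / Real.pi ≤ 0.3184 := by
      rw [div_le_iff₀ hπ]
      linarith
    linarith
  -- integer version of k ≥ 1
  have hk1Z : 1 ≤ k := Int.le_floor.mpr (by push_cast; nlinarith)
  rcases (by omega : 2 * k = (m : ℤ) - 1 ∨ 2 * k = (m : ℤ) - 2 ∨ 2 * k ≤ (m : ℤ) - 3) with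
    hcase | hcase | hcase
  · -- Case 1 : 2k = m - 1 (odd m)
    have hkR : (k : ℝ) = ((m : ℝ) - 1) / 2 := by
      have h' : (2 : ℝ) * (k : ℝ) = (m : ℝ) - 1 := by exact_mod_cast hcase
      linarith
    set t : ℝ := Real.pi / (2 * m) with htdef
    have ht0 : 0 < t := by rw [htdef]; positivity
    have ht8 : t ≤ Real.pi / 6 := by
      rw [htdef]
      gcongr
      linarith
    have ht1 : t ≤ 1 := by nlinarith
    have h2t : Real.pi / m = 2 * t := by rw [htdef]; field_simp <;> ring
    have hsin2 : Real.sin (Real.pi / m) = 2 * Real.sin t * Real.cos t := by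
      rw [h2t, Real.sin_two_mul]
    have hst : 0 < Real.sin t := Real.sin_pos_of_pos_of_lt_pi ht0 (by linarith)
    have hct : 0 < Real.cos t := Real.cos_pos_of_mem_Ioo ⟨by linarith, by linarith⟩
    have harg1 : Real.pi * (k : ℝ) / m = Real.pi / 2 - t := by
      rw [hkR, htdef]; field_simp
      try ring
    have harg2 : Real.pi * ((k : ℝ) + 1) / m = Real.pi / 2 + t := by
      rw [hkR, htdef]; field_simp
      try ring
    have hcos : c = - Real.sin t := by
      rw [hcdef, harg2, Real.cos_add, Real.cos_pi_div_two, Real.sin_pi_div_two]; ring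
    have hAeq : A = 1 / (2 * m * Real.sin t) := by
      rw [hAdef, harg1, Real.sin_pi_div_two_sub, hsin2]
      rw [div_eq_div_iff (by positivity) (by positivity)]
      ring
    have h3u : 3 ≤ 2 * (m : ℝ) * Real.sin t := by
      by_cases hm3 : m = 3
      · subst hm3
        have ht6 : t = Real.pi / 6 := by rw [htdef]; norm_num
        rw [ht6, Real.sin_pi_div_six]; norm_num
      · have hm5 : (4 : ℝ) ≤ (m : ℝ) := by
          have : 4 ≤ m := by omega
          exact_mod_cast this
        have hcube : t - t ^ 3 / 4 < Real.sin t := by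
            have := Real.sin_gt_sub_cube ht0; nlinarith [pow_pos ht0 3]
        have htm : 2 * (m : ℝ) * t = Real.pi := by
          rw [htdef]; field_simp <;> ring
        have heq : 2 * (m : ℝ) * (t - t ^ 3 / 4) = Real.pi - Real.pi * t ^ 2 / 4 := by
          linear_combination (1 - t ^ 2 / 4) * htm
        have htub : t ≤ 0.3927 := by
          have h8 : t ≤ Real.pi / 8 := by
            rw [htdef]; gcongr
            linarith
          linarith
        have hprod : 2 * (m : ℝ) * (t - t ^ 3 / 4) < 2 * (m : ℝ) * Real.sin t :=
          mul_lt_mul_of_pos_left hcube (by positivity)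
        exact numsin Real.pi (2 * (m : ℝ) * (t - t ^ 3 / 4)) (2 * (m : ℝ) * Real.sin t) t
          hπ6 hπ7 hprod heq htub ht0
    have hA13 : A ≤ 1 / 3 := by
      rw [hAeq, div_le_div_iff₀ (by positivity) (by norm_num)]
      linarith
    have h2A : 2 * A * Real.sin t = 1 / m := by
      rw [hAeq]; field_simp <;> ring
    have hrw : A ^ 2 + B ^ 2 + 2 * A * B * (- Real.sin t)
        = A ^ 2 + B ^ 2 - B / m := by
      have hBm : B / (m : ℝ) = B * (1 / m) := by ring
      rw [hBm]
      linear_combination (-B) * h2A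
    rw [hcos, hrw]
    have hBm2 : B ^ 2 - B / (m : ℝ) ≤ 0 := by
      have h' := mul_le_mul_of_nonneg_left hB1.le hB0
      have : B / (m : ℝ) = B * (1 / m) := by ring
      nlinarith [h']
    exact num1 A B (B / (m : ℝ)) δ hA13 hA0 hBm2 hδ1
  · -- Case 2 : 2k = m - 2 (even m)
    have hm4Z : (m : ℤ) ≠ 4 := by omega
    have hk2R : 2 * ((k : ℝ) + 1) = (m : ℝ) := by
      have : (2 : ℤ) * (k + 1) = (m : ℤ) := by omega
      exact_mod_cast this
    have harg : Real.pi * ((k : ℝ) + 1) / m = Real.pi / 2 := by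
      rw [div_eq_iff (ne_of_gt hm0)]
      linear_combination (Real.pi / 2) * hk2R
    have hcos : c = 0 := by rw [hcdef, harg, Real.cos_pi_div_two]
    rcases (by omega : k = 2 ∨ k = 3 ∨ 4 ≤ k) with hk' | hk' | hk'
    · -- m = 6
      have hm6 : (m : ℝ) = 6 := by
        have : (m : ℤ) = 6 := by omega
        exact_mod_cast this
      have hkR : (k : ℝ) = 2 := by exact_mod_cast hk'
      have hAeq : A = Real.sqrt 3 / 6 := by
        rw [hAdef, hkR, hm6, show Real.pi * 2 / 6 = Real.pi / 3 by ring,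
          Real.sin_pi_div_three, Real.sin_pi_div_six]
        ring
      have hBeq : B = δ - 1 / 3 := by rw [hBdef, hkR, hm6]; norm_num
      rw [hcos, hAeq, hBeq]
      exact num6 (Real.sqrt 3) δ (Real.sq_sqrt (by norm_num)) hδ1
    · -- m = 8
      have hm8 : (m : ℝ) = 8 := by
        have : (m : ℤ) = 8 := by omega
        exact_mod_cast this
      have hkR : (k : ℝ) = 3 := by exact_mod_cast hk'
      have hs : Real.sin (Real.pi * (k : ℝ) / m) ≤ Real.cos (Real.pi / m) := by
        rw [hkR, hm8, show Real.pi * 3 / 8 = Real.pi / 2 - Real.pi / 8 by ring,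
          Real.sin_pi_div_two_sub]
      have hA' := hAb hs
      have hBeq : B = δ - 3 / 8 := by rw [hBdef, hkR, hm8]
      rw [hcos, hBeq]
      exact num8 A δ hA' hA0 hδ1
    · -- m ≥ 10
      have hm10 : (10 : ℝ) ≤ (m : ℝ) := by
        have : (10 : ℤ) ≤ (m : ℤ) := by omega
        exact_mod_cast this
      have hkR : (k : ℝ) = (m : ℝ) / 2 - 1 := by linarith
      have harg1 : Real.pi * (k : ℝ) / m = Real.pi / 2 - Real.pi / m := by
        rw [hkR]; field_simp <;> ring
      have hs : Real.sin (Real.pi * (k : ℝ) / m) ≤ Real.cos (Real.pi / m) := by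
        rw [harg1, Real.sin_pi_div_two_sub]
      have hA' := hAb hs
      have hB10 : B ≤ 1 / 10 := by
        have h' : (1 : ℝ) / m ≤ 1 / 10 := by
          rw [div_le_div_iff₀ hm0 (by norm_num)]; linarith
        linarith
      rw [hcos]
      exact num10 A B δ hA' hA0 hB0 hB10 hδ1
  · -- Case 3 : 2k ≤ m - 3
    have hk3R : 2 * (k : ℝ) ≤ (m : ℝ) - 3 := by exact_mod_cast hcase
    have hm26 : (26 : ℝ) ≤ (m : ℝ) := by
      have h25 : (25 : ℝ) < (m : ℝ) := by
        nlinarith [mul_nonneg (sub_nonneg.mpr hδ1) hm0.le]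
      have h25' : (25 : ℤ) < (m : ℤ) := by exact_mod_cast h25
      have : (26 : ℤ) ≤ (m : ℤ) := by omega
      exact_mod_cast this
    have harg_le : Real.pi * (k : ℝ) / m ≤ Real.pi / 2 - Real.pi / m := by
      have hmm : (Real.pi / 2 - Real.pi / m) * m = Real.pi * m / 2 - Real.pi := by
        field_simp <;> ring
      rw [div_le_iff₀ hm0, hmm]
      nlinarith [mul_nonneg hπ.le (show (0 : ℝ) ≤ (m : ℝ) - 2 - 2 * k by linarith)]
    have h0le : 0 ≤ Real.pi * (k : ℝ) / m := by positivity
    have hs : Real.sin (Real.pi * (k : ℝ) / m) ≤ Real.cos (Real.pi / m) := by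
      have hπm0 : 0 < Real.pi / m := by positivity
      have hπmπ : Real.pi / m ≤ Real.pi / 2 := by
        rw [div_le_div_iff₀ hm0 (by norm_num)]
        nlinarith
      calc Real.sin (Real.pi * (k : ℝ) / m)
          ≤ Real.sin (Real.pi / 2 - Real.pi / m) := by
            apply Real.strictMonoOn_sin.monotoneOn _ _ harg_le
            · constructor
              · linarith
              · linarith
            · constructor
              · linarith
              · linarith
        _ = Real.cos (Real.pi / m) := Real.sin_pi_div_two_sub _
    have hA' := hAb hs
    have hB26 : B ≤ 1 / 26 := by
      have h' : (1 : ℝ) / m ≤ 1 / 26 := by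
        rw [div_le_div_iff₀ hm0 (by norm_num)]; linarith
      linarith
    have hθlt : Real.pi * ((k : ℝ) + 1) / m < Real.pi / 2 := by
      rw [div_lt_iff₀ hm0]
      nlinarith [mul_pos hπ (show (0 : ℝ) < (m : ℝ) - 2 * ((k : ℝ) + 1) by linarith)]
    have hθgt : 0.48 * Real.pi < Real.pi * ((k : ℝ) + 1) / m := by
      rw [lt_div_iff₀ hm0]
      have hδm : 0.48 * (m : ℝ) ≤ δ * m := by
        nlinarith [mul_nonneg (sub_nonneg.mpr hδ1) hm0.le]
      nlinarith [mul_pos hπ (show (0 : ℝ) < (k : ℝ) + 1 - 0.48 * m by linarith)]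
    have hcle : c ≤ 0.0629 := by
      have hy : c = Real.sin (Real.pi / 2 - Real.pi * ((k : ℝ) + 1) / m) := by
        rw [hcdef, Real.sin_pi_div_two_sub]
      have hy0 : 0 < Real.pi / 2 - Real.pi * ((k : ℝ) + 1) / m := by linarith
      have hsl := Real.sin_lt hy0
      rw [hy]
      nlinarith
    have hAB : 0 ≤ A * B := mul_nonneg hA0 hB0
    exact num26 A B c δ hA' hA0 hB0 hB26 hcle hAB hδ1

theorem stmt_2 (δ : ℝ) (hδ : δ ∈ Set.Ico (0.48 : ℝ) 0.5) :
    (∀ m : ℕ, 3 ≤ m → S δ m ≤ S δ 4) ∧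
      S δ 4 = (1 / 4) * Real.sqrt (1 + (4 * δ - 1) ^ 2) := by
  obtain ⟨hδ1, hδ2⟩ := hδ
  have hS4 : S δ 4 = Real.sqrt (1 / 16 + (δ - 1 / 4) ^ 2) := S4_eq δ hδ1 hδ2
  constructor
  · intro m hm
    by_cases h4 : m = 4
    · subst h4; exact le_refl _
    · rw [hS4]
      exact key δ hδ1 hδ2 m hm h4
  · rw [hS4, show (1 : ℝ) + (4 * δ - 1) ^ 2 = 16 * (1 / 16 + (δ - 1 / 4) ^ 2) by ring,
      Real.sqrt_mul (by norm_num : (0 : ℝ) ≤ 16)]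
    rw [show Real.sqrt 16 = 4 by
      rw [show (16 : ℝ) = 4 ^ 2 by norm_num]; exact Real.sqrt_sq (by norm_num)]
    ring
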